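/- arXiv:2011.08986 — 2 statements merged into one kernel-verified Lean document; each statement's English description precedes it below -/
import Mathlib

section
/- Let V₁ = (Y₁,C₁,τ₁,H₁), V₂ = (Y₂,C₂,τ₂,H₂) be infinitesimal stochastic transformations on an open set M ⊆ ℝⁿ and let V₃ = (Y₃,C₃,τ₃,H₃) = [V₁,V₂] be their bracket. Define, for each i, the operators L_i(B) = Y_i(B) + B·C_i on smooth Mat(m,m)-valued functions B and N_i(η) = Y_i(η) + τ_i·η on smooth real-valued functions η. Then the operator commutators satisfy [L₁,L₂] = L₃ (i.e. L₁(L₂(B)) − L₂(L₁(B)) = L₃(B) for every smooth B: M → Mat(m,m)) and [N₁,N₂] = N₃ (i.e. N₁(N₂(η)) − N₂(N₁(η)) = N₃(η) for every smooth η: M → ℝ). -/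
open Matrix

/-- Partial derivative `∂ᵢ f` of a scalar function on `ℝⁿ`. -/
noncomputable def pd {n : ℕ} (i : Fin n) (f : (Fin n → ℝ) → ℝ) (x : Fin n → ℝ) : ℝ :=
  fderiv ℝ f x (Pi.single i 1)

/-- Action `Y(f) = Yⁱ ∂ᵢ f` of a vector field on a scalar function. -/
noncomputable def vfd {n : ℕ} (Y : (Fin n → ℝ) → Fin n → ℝ)
    (f : (Fin n → ℝ) → ℝ) (x : Fin n → ℝ) : ℝ :=
  ∑ j, Y x j * pd j f x

/-- Infinitesimal generator `L(f) = ½ (σσᵀ)^{ij} ∂ᵢ∂ⱼ f + μⁱ ∂ᵢ f` of the SDE `(μ,σ)`. -/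
noncomputable def gen {n m : ℕ} (μ : (Fin n → ℝ) → Fin n → ℝ)
    (σ : (Fin n → ℝ) → Matrix (Fin n) (Fin m) ℝ)
    (f : (Fin n → ℝ) → ℝ) (x : Fin n → ℝ) : ℝ :=
  (1 / 2) * ∑ i, ∑ j, (∑ α, σ x i α * σ x j α) * pd i (pd j f) x
    + ∑ i, μ x i * pd i f x

/-- Entrywise smoothness of a vector-valued function on a set. -/
def SmoothVec {n k : ℕ} (M : Set (Fin n → ℝ)) (f : (Fin n → ℝ) → Fin k → ℝ) : Prop :=
  ∀ i, ContDiffOn ℝ (⊤ : ℕ∞) (fun x => f x i) M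

/-- Entrywise smoothness of a matrix-valued function on a set. -/
def SmoothMat {n k l : ℕ} (M : Set (Fin n → ℝ))
    (f : (Fin n → ℝ) → Matrix (Fin k) (Fin l) ℝ) : Prop :=
  ∀ i j, ContDiffOn ℝ (⊤ : ℕ∞) (fun x => f x i j) M

/-- First component (`Y`-part) of the bracket of two infinitesimal stochastic
transformations: `[Y₁,Y₂]`. -/
noncomputable def brY {n : ℕ} (Y₁ Y₂ : (Fin n → ℝ) → Fin n → ℝ) (x : Fin n → ℝ) :
    Fin n → ℝ := fun i =>
  vfd Y₁ (fun y => Y₂ y i) x - vfd Y₂ (fun y => Y₁ y i) x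

/-- Second component (`C`-part) of the bracket: `Y₁(C₂) − Y₂(C₁) − (C₁C₂ − C₂C₁)`. -/
noncomputable def brC {n m : ℕ} (Y₁ Y₂ : (Fin n → ℝ) → Fin n → ℝ)
    (C₁ C₂ : (Fin n → ℝ) → Matrix (Fin m) (Fin m) ℝ) (x : Fin n → ℝ) :
    Matrix (Fin m) (Fin m) ℝ :=
  Matrix.of fun a b =>
    vfd Y₁ (fun y => C₂ y a b) x - vfd Y₂ (fun y => C₁ y a b) x
      - ((C₁ x * C₂ x) a b - (C₂ x * C₁ x) a b)

/-- Third component (`τ`-part) of the bracket: `Y₁(τ₂) − Y₂(τ₁)`. -/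
noncomputable def brTau {n : ℕ} (Y₁ Y₂ : (Fin n → ℝ) → Fin n → ℝ)
    (τ₁ τ₂ : (Fin n → ℝ) → ℝ) (x : Fin n → ℝ) : ℝ :=
  vfd Y₁ τ₂ x - vfd Y₂ τ₁ x

/-- Fourth component (`H`-part) of the bracket:
`Y₁(H₂) − Y₂(H₁) − (−τ₁/2 + C₁)·H₂ + (−τ₂/2 + C₂)·H₁`. -/
noncomputable def brH {n m : ℕ} (Y₁ Y₂ : (Fin n → ℝ) → Fin n → ℝ)
    (C₁ C₂ : (Fin n → ℝ) → Matrix (Fin m) (Fin m) ℝ)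
    (τ₁ τ₂ : (Fin n → ℝ) → ℝ)
    (H₁ H₂ : (Fin n → ℝ) → Fin m → ℝ) (x : Fin n → ℝ) : Fin m → ℝ := fun a =>
  vfd Y₁ (fun y => H₂ y a) x - vfd Y₂ (fun y => H₁ y a) x
    - ((-(τ₁ x) / 2) * H₂ x a + ∑ b, C₁ x a b * H₂ x b)
    + ((-(τ₂ x) / 2) * H₁ x a + ∑ b, C₂ x a b * H₁ x b)

/-- The operator `L_i(B) = Y_i(B) + B·C_i` on matrix-valued functions. -/
noncomputable def LOp {n m : ℕ} (Y : (Fin n → ℝ) → Fin n → ℝ)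
    (C : (Fin n → ℝ) → Matrix (Fin m) (Fin m) ℝ)
    (B : (Fin n → ℝ) → Matrix (Fin m) (Fin m) ℝ) (x : Fin n → ℝ) :
    Matrix (Fin m) (Fin m) ℝ :=
  Matrix.of fun a b => vfd Y (fun y => B y a b) x + (B x * C x) a b

/-- The operator `N_i(η) = Y_i(η) + τ_i·η` on real-valued functions. -/
noncomputable def NOp {n : ℕ} (Y : (Fin n → ℝ) → Fin n → ℝ)
    (τ : (Fin n → ℝ) → ℝ) (η : (Fin n → ℝ) → ℝ) (x : Fin n → ℝ) : ℝ :=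
  vfd Y η x + τ x * η x

/-!
Both operators are a vector field plus a multiplication operator. Expanding `L₁L₂B − L₂L₁B`
with the Leibniz rule, the second-order terms `Y₁Y₂B − Y₂Y₁B` reduce to `[Y₁,Y₂]B` by symmetry of
second partials, the cross terms `Y₁(B)C₂ + Y₂(B)C₁` cancel, and what remains is
`B(Y₁(C₂) − Y₂(C₁)) + B(C₂C₁ − C₁C₂) = B·C₃`. For `N` the multipliers commute, so no commutator
term appears.
-/

section PointwiseCalculus

variable {n : ℕ} {x : Fin n → ℝ} {f g : (Fin n → ℝ) → ℝ}

lemma pd_add (i : Fin n) (hf : DifferentiableAt ℝ f x) (hg : DifferentiableAt ℝ g x) :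
    pd i (fun y => f y + g y) x = pd i f x + pd i g x := by
  simp [pd, fderiv_fun_add hf hg]

lemma pd_mul (i : Fin n) (hf : DifferentiableAt ℝ f x) (hg : DifferentiableAt ℝ g x) :
    pd i (fun y => f y * g y) x = pd i f x * g x + f x * pd i g x := by
  simp only [pd, fderiv_fun_mul hf hg, _root_.add_apply, _root_.smul_apply, smul_eq_mul]
  ring

lemma pd_sum (i : Fin n) {k : ℕ} {F : Fin k → (Fin n → ℝ) → ℝ}
    (hF : ∀ j, DifferentiableAt ℝ (F j) x) :
    pd i (fun y => ∑ j, F j y) x = ∑ j, pd i (F j) x := by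
  simp [pd, fderiv_fun_sum fun j _ => hF j]

variable {Y : (Fin n → ℝ) → Fin n → ℝ}

lemma vfd_add (hf : DifferentiableAt ℝ f x) (hg : DifferentiableAt ℝ g x) :
    vfd Y (fun y => f y + g y) x = vfd Y f x + vfd Y g x := by
  simp only [vfd, pd_add _ hf hg, mul_add, Finset.sum_add_distrib]

lemma vfd_mul (hf : DifferentiableAt ℝ f x) (hg : DifferentiableAt ℝ g x) :
    vfd Y (fun y => f y * g y) x = vfd Y f x * g x + f x * vfd Y g x := by
  simp only [vfd, pd_mul _ hf hg, Finset.sum_mul, Finset.mul_sum, ← Finset.sum_add_distrib]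
  exact Finset.sum_congr rfl fun j _ => by ring

lemma vfd_sum {k : ℕ} {F : Fin k → (Fin n → ℝ) → ℝ} (hF : ∀ j, DifferentiableAt ℝ (F j) x) :
    vfd Y (fun y => ∑ j, F j y) x = ∑ j, vfd Y (F j) x := by
  simp only [vfd, pd_sum _ hF, Finset.mul_sum]
  exact Finset.sum_comm

end PointwiseCalculus

section SmoothCalculus

variable {n : ℕ} {M : Set (Fin n → ℝ)} {x : Fin n → ℝ} {f : (Fin n → ℝ) → ℝ}
  {Y Y₁ Y₂ : (Fin n → ℝ) → Fin n → ℝ}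

lemma ContDiffOn.differentiableAt_of_isOpen {F : Type*} [NormedAddCommGroup F]
    [NormedSpace ℝ F] {f : (Fin n → ℝ) → F} (hf : ContDiffOn ℝ (⊤ : ℕ∞) f M) (hM : IsOpen M)
    (hx : x ∈ M) : DifferentiableAt ℝ f x :=
  (hf.differentiableOn (by simp)).differentiableAt (hM.mem_nhds hx)

lemma ContDiffOn.fderiv_of_isOpen_top (hf : ContDiffOn ℝ (⊤ : ℕ∞) f M) (hM : IsOpen M) :
    ContDiffOn ℝ (⊤ : ℕ∞) (fderiv ℝ f) M :=
  hf.fderiv_of_isOpen hM (by exact_mod_cast le_top)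

lemma ContDiffOn.pd (hf : ContDiffOn ℝ (⊤ : ℕ∞) f M) (hM : IsOpen M) (i : Fin n) :
    ContDiffOn ℝ (⊤ : ℕ∞) (pd i f) M :=
  (hf.fderiv_of_isOpen_top hM).clm_apply contDiffOn_const

lemma ContDiffOn.vfd (hf : ContDiffOn ℝ (⊤ : ℕ∞) f M) (hM : IsOpen M) (hY : SmoothVec M Y) :
    ContDiffOn ℝ (⊤ : ℕ∞) (vfd Y f) M :=
  ContDiffOn.sum fun j _ => (hY j).mul (hf.pd hM j)

lemma pd_pd_comm (hf : ContDiffOn ℝ (⊤ : ℕ∞) f M) (hM : IsOpen M) (hx : x ∈ M) (i j : Fin n) :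
    pd i (pd j f) x = pd j (pd i f) x := by
  have hsymm : IsSymmSndFDerivAt ℝ f x :=
    (hf.contDiffAt (hM.mem_nhds hx)).isSymmSndFDerivAt
      (by rw [minSmoothness_of_isRCLikeNormedField]; exact WithTop.coe_le_coe.2 le_top)
  have hd : DifferentiableAt ℝ (fderiv ℝ f) x :=
    (hf.fderiv_of_isOpen_top hM).differentiableAt_of_isOpen hM hx
  have hsecond : ∀ i j : Fin n,
      pd i (pd j f) x = fderiv ℝ (fderiv ℝ f) x (Pi.single i 1) (Pi.single j 1) := by
    intro i j
    change fderiv ℝ (fun y => fderiv ℝ f y (Pi.single j 1)) x (Pi.single i 1) = _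
    simp [fderiv_clm_apply hd (differentiableAt_const _)]
  rw [hsecond, hsecond, hsymm]

lemma pd_vfd (hf : ContDiffOn ℝ (⊤ : ℕ∞) f M) (hM : IsOpen M) (hY : SmoothVec M Y)
    (hx : x ∈ M) (i : Fin n) :
    pd i (vfd Y f) x
      = ∑ j, (pd i (fun y => Y y j) x * pd j f x + Y x j * pd i (pd j f) x) := by
  have hYj j := (hY j).differentiableAt_of_isOpen hM hx
  have hfj j := (hf.pd hM j).differentiableAt_of_isOpen hM hx
  change pd i (fun y => ∑ j, Y y j * pd j f y) x = _
  rw [pd_sum i fun j => (hYj j).fun_mul (hfj j)]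
  exact Finset.sum_congr rfl fun j _ => pd_mul i (hYj j) (hfj j)

theorem vfd_commutator (hf : ContDiffOn ℝ (⊤ : ℕ∞) f M) (hM : IsOpen M)
    (hY₁ : SmoothVec M Y₁) (hY₂ : SmoothVec M Y₂) (hx : x ∈ M) :
    vfd Y₁ (vfd Y₂ f) x - vfd Y₂ (vfd Y₁ f) x = vfd (brY Y₁ Y₂) f x := by
  have hsecond : ∑ i, ∑ j, Y₁ x i * (Y₂ x j * pd i (pd j f) x)
      = ∑ i, ∑ j, Y₂ x i * (Y₁ x j * pd i (pd j f) x) := by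
    rw [Finset.sum_comm]
    refine Finset.sum_congr rfl fun i _ => Finset.sum_congr rfl fun j _ => ?_
    rw [pd_pd_comm hf hM hx j i]; ring
  simp only [vfd, brY, pd_vfd hf hM hY₁ hx, pd_vfd hf hM hY₂ hx, mul_add, Finset.mul_sum,
    Finset.sum_add_distrib, sub_mul, Finset.sum_sub_distrib, Finset.sum_mul, mul_assoc, hsecond]
  rw [Finset.sum_comm (f := fun i j => Y₁ x i * (pd i (fun y => Y₂ y j) x * pd j f x)),
    Finset.sum_comm (f := fun i j => Y₂ x i * (pd i (fun y => Y₁ y j) x * pd j f x))]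
  abel

end SmoothCalculus

noncomputable def vfdMat {n k l : ℕ} (Y : (Fin n → ℝ) → Fin n → ℝ)
    (B : (Fin n → ℝ) → Matrix (Fin k) (Fin l) ℝ) (x : Fin n → ℝ) : Matrix (Fin k) (Fin l) ℝ :=
  Matrix.of fun a b => vfd Y (fun y => B y a b) x

section MatrixCalculus

variable {n k l p : ℕ} {M : Set (Fin n → ℝ)} {x : Fin n → ℝ}
  {Y Y₁ Y₂ : (Fin n → ℝ) → Fin n → ℝ}

lemma SmoothMat.differentiableAt {B : (Fin n → ℝ) → Matrix (Fin k) (Fin l) ℝ}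
    (hB : SmoothMat M B) (hM : IsOpen M) (hx : x ∈ M) (a : Fin k) (b : Fin l) :
    DifferentiableAt ℝ (fun y => B y a b) x :=
  (hB a b).differentiableAt_of_isOpen hM hx

lemma SmoothMat.mul {B : (Fin n → ℝ) → Matrix (Fin k) (Fin l) ℝ}
    {C : (Fin n → ℝ) → Matrix (Fin l) (Fin p) ℝ} (hB : SmoothMat M B) (hC : SmoothMat M C) :
    SmoothMat M fun y => B y * C y :=
  fun a b => by
    simpa only [Matrix.mul_apply] using ContDiffOn.sum fun c _ => (hB a c).mul (hC c b)

lemma SmoothMat.vfdMat {B : (Fin n → ℝ) → Matrix (Fin k) (Fin l) ℝ} (hB : SmoothMat M B)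
    (hM : IsOpen M) (hY : SmoothVec M Y) : SmoothMat M (vfdMat Y B) :=
  fun a b => (hB a b).vfd hM hY

lemma vfdMat_add {B C : (Fin n → ℝ) → Matrix (Fin k) (Fin l) ℝ} (hB : SmoothMat M B)
    (hC : SmoothMat M C) (hM : IsOpen M) (hx : x ∈ M) :
    vfdMat Y (fun y => B y + C y) x = vfdMat Y B x + vfdMat Y C x := by
  ext a b
  exact vfd_add (hB.differentiableAt hM hx a b) (hC.differentiableAt hM hx a b)

lemma vfdMat_mul {B : (Fin n → ℝ) → Matrix (Fin k) (Fin l) ℝ}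
    {C : (Fin n → ℝ) → Matrix (Fin l) (Fin p) ℝ} (hB : SmoothMat M B) (hC : SmoothMat M C)
    (hM : IsOpen M) (hx : x ∈ M) :
    vfdMat Y (fun y => B y * C y) x = vfdMat Y B x * C x + B x * vfdMat Y C x := by
  ext a b
  have hBC c := (hB.differentiableAt hM hx a c).fun_mul (hC.differentiableAt hM hx c b)
  simp only [vfdMat, Matrix.mul_apply, Matrix.add_apply, Matrix.of_apply, vfd_sum hBC,
    ← Finset.sum_add_distrib]
  exact Finset.sum_congr rfl fun c _ =>
    vfd_mul (hB.differentiableAt hM hx a c) (hC.differentiableAt hM hx c b)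

lemma vfdMat_commutator {B : (Fin n → ℝ) → Matrix (Fin k) (Fin l) ℝ} (hB : SmoothMat M B)
    (hM : IsOpen M) (hY₁ : SmoothVec M Y₁) (hY₂ : SmoothVec M Y₂) (hx : x ∈ M) :
    vfdMat Y₁ (vfdMat Y₂ B) x - vfdMat Y₂ (vfdMat Y₁ B) x = vfdMat (brY Y₁ Y₂) B x := by
  ext a b
  exact vfd_commutator (hB a b) hM hY₁ hY₂ hx

end MatrixCalculus

section Operators

variable {n m : ℕ} {M : Set (Fin n → ℝ)} {x : Fin n → ℝ} {Y Y' Y₁ Y₂ : (Fin n → ℝ) → Fin n → ℝ}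

lemma LOp_eq (C B : (Fin n → ℝ) → Matrix (Fin m) (Fin m) ℝ) :
    LOp Y C B = fun x => vfdMat Y B x + B x * C x :=
  rfl

lemma brC_eq (C₁ C₂ : (Fin n → ℝ) → Matrix (Fin m) (Fin m) ℝ) :
    brC Y₁ Y₂ C₁ C₂ x = vfdMat Y₁ C₂ x - vfdMat Y₂ C₁ x - (C₁ x * C₂ x - C₂ x * C₁ x) :=
  rfl

lemma LOp_LOp {C C' B : (Fin n → ℝ) → Matrix (Fin m) (Fin m) ℝ} (hM : IsOpen M)
    (hY : SmoothVec M Y) (hC : SmoothMat M C) (hB : SmoothMat M B) (hx : x ∈ M) :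
    LOp Y' C' (LOp Y C B) x
      = vfdMat Y' (vfdMat Y B) x + (vfdMat Y' B x * C x + B x * vfdMat Y' C x)
        + (vfdMat Y B x + B x * C x) * C' x := by
  simp only [LOp_eq]
  rw [vfdMat_add (hB.vfdMat hM hY) (hB.mul hC) hM hx, vfdMat_mul hB hC hM hx]

theorem LOp_commutator {C₁ C₂ B : (Fin n → ℝ) → Matrix (Fin m) (Fin m) ℝ} (hM : IsOpen M)
    (hY₁ : SmoothVec M Y₁) (hY₂ : SmoothVec M Y₂) (hC₁ : SmoothMat M C₁)
    (hC₂ : SmoothMat M C₂) (hB : SmoothMat M B) (hx : x ∈ M) :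
    LOp Y₁ C₁ (LOp Y₂ C₂ B) x - LOp Y₂ C₂ (LOp Y₁ C₁ B) x
      = LOp (brY Y₁ Y₂) (brC Y₁ Y₂ C₁ C₂) B x := by
  rw [LOp_LOp hM hY₂ hC₂ hB hx, LOp_LOp hM hY₁ hC₁ hB hx]
  simp only [LOp_eq, brC_eq, ← vfdMat_commutator hB hM hY₁ hY₂ hx]
  noncomm_ring

lemma NOp_eq (τ η : (Fin n → ℝ) → ℝ) :
    NOp Y τ η = fun x => vfd Y η x + τ x * η x :=
  rfl

lemma NOp_NOp {τ τ' η : (Fin n → ℝ) → ℝ} (hM : IsOpen M) (hY : SmoothVec M Y)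
    (hτ : ContDiffOn ℝ (⊤ : ℕ∞) τ M) (hη : ContDiffOn ℝ (⊤ : ℕ∞) η M) (hx : x ∈ M) :
    NOp Y' τ' (NOp Y τ η) x
      = vfd Y' (vfd Y η) x + (vfd Y' τ x * η x + τ x * vfd Y' η x)
        + τ' x * (vfd Y η x + τ x * η x) := by
  have hτx := hτ.differentiableAt_of_isOpen hM hx
  have hηx := hη.differentiableAt_of_isOpen hM hx
  simp only [NOp_eq]
  rw [vfd_add ((hη.vfd hM hY).differentiableAt_of_isOpen hM hx)
    (hτx.fun_mul hηx), vfd_mul hτx hηx]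

theorem NOp_commutator {τ₁ τ₂ η : (Fin n → ℝ) → ℝ} (hM : IsOpen M)
    (hY₁ : SmoothVec M Y₁) (hY₂ : SmoothVec M Y₂) (hτ₁ : ContDiffOn ℝ (⊤ : ℕ∞) τ₁ M)
    (hτ₂ : ContDiffOn ℝ (⊤ : ℕ∞) τ₂ M) (hη : ContDiffOn ℝ (⊤ : ℕ∞) η M) (hx : x ∈ M) :
    NOp Y₁ τ₁ (NOp Y₂ τ₂ η) x - NOp Y₂ τ₂ (NOp Y₁ τ₁ η) x
      = NOp (brY Y₁ Y₂) (brTau Y₁ Y₂ τ₁ τ₂) η x := by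
  rw [NOp_NOp hM hY₂ hτ₂ hη hx, NOp_NOp hM hY₁ hτ₁ hη hx]
  simp only [NOp_eq, brTau, ← vfd_commutator hη hM hY₁ hY₂ hx]
  ring

end Operators

theorem statement12_general {n m : ℕ} (M : Set (Fin n → ℝ)) (hM : IsOpen M)
    (Y₁ Y₂ : (Fin n → ℝ) → Fin n → ℝ)
    (C₁ C₂ : (Fin n → ℝ) → Matrix (Fin m) (Fin m) ℝ)
    (τ₁ τ₂ : (Fin n → ℝ) → ℝ)
    (hY₁ : SmoothVec M Y₁) (hY₂ : SmoothVec M Y₂)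
    (hC₁s : SmoothMat M C₁) (hC₂s : SmoothMat M C₂)
    (hτ₁ : ContDiffOn ℝ (⊤ : ℕ∞) τ₁ M) (hτ₂ : ContDiffOn ℝ (⊤ : ℕ∞) τ₂ M) :
    (∀ B : (Fin n → ℝ) → Matrix (Fin m) (Fin m) ℝ, SmoothMat M B →
      ∀ x ∈ M, ∀ a b,
        LOp Y₁ C₁ (LOp Y₂ C₂ B) x a b - LOp Y₂ C₂ (LOp Y₁ C₁ B) x a b =
          LOp (brY Y₁ Y₂) (brC Y₁ Y₂ C₁ C₂) B x a b) ∧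
    (∀ η : (Fin n → ℝ) → ℝ, ContDiffOn ℝ (⊤ : ℕ∞) η M →
      ∀ x ∈ M,
        NOp Y₁ τ₁ (NOp Y₂ τ₂ η) x - NOp Y₂ τ₂ (NOp Y₁ τ₁ η) x =
          NOp (brY Y₁ Y₂) (brTau Y₁ Y₂ τ₁ τ₂) η x) :=
  ⟨fun _B hB _x hx a b => by
      rw [← LOp_commutator hM hY₁ hY₂ hC₁s hC₂s hB hx, Matrix.sub_apply],
    fun _η hη _x hx => NOp_commutator hM hY₁ hY₂ hτ₁ hτ₂ hη hx⟩

/-- For `V₃ = [V₁,V₂]` one has the operator identities `[L₁,L₂] = L₃` and `[N₁,N₂] = N₃`. -/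
theorem statement12 {n m : ℕ} (M : Set (Fin n → ℝ)) (hM : IsOpen M)
    (Y₁ Y₂ : (Fin n → ℝ) → Fin n → ℝ)
    (C₁ C₂ : (Fin n → ℝ) → Matrix (Fin m) (Fin m) ℝ)
    (τ₁ τ₂ : (Fin n → ℝ) → ℝ) (H₁ H₂ : (Fin n → ℝ) → Fin m → ℝ)
    (hY₁ : SmoothVec M Y₁) (hY₂ : SmoothVec M Y₂)
    (hC₁s : SmoothMat M C₁) (hC₂s : SmoothMat M C₂)
    (hτ₁ : ContDiffOn ℝ (⊤ : ℕ∞) τ₁ M) (hτ₂ : ContDiffOn ℝ (⊤ : ℕ∞) τ₂ M)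
    (hH₁ : SmoothVec M H₁) (hH₂ : SmoothVec M H₂)
    (hC₁ : ∀ x ∈ M, (C₁ x)ᵀ = -(C₁ x)) (hC₂ : ∀ x ∈ M, (C₂ x)ᵀ = -(C₂ x)) :
    (∀ B : (Fin n → ℝ) → Matrix (Fin m) (Fin m) ℝ, SmoothMat M B →
      ∀ x ∈ M, ∀ a b,
        LOp Y₁ C₁ (LOp Y₂ C₂ B) x a b - LOp Y₂ C₂ (LOp Y₁ C₁ B) x a b =
          LOp (brY Y₁ Y₂) (brC Y₁ Y₂ C₁ C₂) B x a b) ∧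
    (∀ η : (Fin n → ℝ) → ℝ, ContDiffOn ℝ (⊤ : ℕ∞) η M →
      ∀ x ∈ M,
        NOp Y₁ τ₁ (NOp Y₂ τ₂ η) x - NOp Y₂ τ₂ (NOp Y₁ τ₁ η) x =
          NOp (brY Y₁ Y₂) (brTau Y₁ Y₂ τ₁ τ₂) η x) :=
  statement12_general M hM Y₁ Y₂ C₁ C₂ τ₁ τ₂ hY₁ hY₂ hC₁s hC₂s hτ₁ hτ₂
end

section
/- Let σ: M → Mat(n,m) be smooth on an open set M ⊆ ℝⁿ and let V = (Y,C,τ,H) be an infinitesimal stochastic transformation satisfying the second determining equation [Y,σ] + ½τσ + σ·C = 0 and with H = σᵀ·∇k for a smooth function k: M → ℝ. If a smooth function k̄: M → ℝ satisfies Y(k̄) = −k on M, then Y(σᵀ·∇k̄) + ½τ·σᵀ·∇k̄ − C·σᵀ·∇k̄ + σᵀ·∇k = 0 on M; i.e. h = σᵀ·∇k̄ solves the straightening equation Y(h) = (−τ/2 + C)·h − H. -/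
open Matrix Topology VectorField

/-! The components `hₐ = Σₚ σₚₐ ∂ₚk̄` of `σᵀ·∇k̄` are the derivatives of `k̄` along the columns
`σₐ` of `σ`. Since the second derivative of `k̄` is symmetric, the commutator of the derivations
`Y` and `σₐ` is the derivation along the Lie bracket, so `Y(hₐ) = σₐ(Y k̄) + [Y,σₐ](k̄)`.
The first term is `−σₐ(k)`; the determining equation says `[Y,σₐ] = −½τσₐ − (σC)ₐ`, and by the
antisymmetry of `C` this field applied to `k̄` is `−½τ hₐ + (C h)ₐ`. -/

lemma SmoothVec.differentiableAt {n k : ℕ} {M : Set (Fin n → ℝ)} {f : (Fin n → ℝ) → Fin k → ℝ}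
    (hf : SmoothVec M f) (hM : IsOpen M) {x : Fin n → ℝ} (hx : x ∈ M) :
    DifferentiableAt ℝ f x :=
  differentiableAt_pi.2 fun j => ((hf j).contDiffAt (hM.mem_nhds hx)).differentiableAt (by simp)

section VectorFieldDerivative

variable {n : ℕ}

lemma vfd_eq_fderiv (Y : (Fin n → ℝ) → Fin n → ℝ) (f : (Fin n → ℝ) → ℝ) (x : Fin n → ℝ) :
    vfd Y f x = fderiv ℝ f x (Y x) := by
  conv_rhs => rw [pi_eq_sum_univ' (Y x), map_sum]
  simp [vfd, pd]

lemma vfd_congr_of_eventuallyEq {Y : (Fin n → ℝ) → Fin n → ℝ} {f g : (Fin n → ℝ) → ℝ}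
    {x : Fin n → ℝ} (h : f =ᶠ[𝓝 x] g) : vfd Y f x = vfd Y g x := by
  simp only [vfd_eq_fderiv, h.fderiv_eq]

lemma vfd_neg (Y : (Fin n → ℝ) → Fin n → ℝ) (f : (Fin n → ℝ) → ℝ) (x : Fin n → ℝ) :
    vfd Y (fun y => -f y) x = -vfd Y f x := by
  simp [vfd_eq_fderiv, fderiv_fun_neg]

lemma lieBracket_apply_eq_vfd_sub_vfd {X Y : (Fin n → ℝ) → Fin n → ℝ} {x : Fin n → ℝ}
    (hX : DifferentiableAt ℝ X x) (hY : DifferentiableAt ℝ Y x) (i : Fin n) :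
    lieBracket ℝ Y X x i = vfd Y (fun y => X y i) x - vfd X (fun y => Y y i) x := by
  simp [lieBracket, vfd_eq_fderiv, fderiv_apply hX, fderiv_apply hY]

lemma vfd_lieBracket {X Y : (Fin n → ℝ) → Fin n → ℝ} {f : (Fin n → ℝ) → ℝ} {x : Fin n → ℝ}
    (hf : ContDiffAt ℝ 2 f x) (hX : DifferentiableAt ℝ X x) (hY : DifferentiableAt ℝ Y x) :
    vfd (lieBracket ℝ Y X) f x = vfd Y (vfd X f) x - vfd X (vfd Y f) x := by
  have hvfd : ∀ Z : (Fin n → ℝ) → Fin n → ℝ, vfd Z f = fun y => fderiv ℝ f y (Z y) :=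
    fun Z => funext (vfd_eq_fderiv Z f)
  rw [vfd_eq_fderiv, vfd_eq_fderiv, vfd_eq_fderiv, hvfd X, hvfd Y]
  exact fderiv_apply_lieBracket hf minSmoothness_of_isRCLikeNormedField.le hX hY

end VectorFieldDerivative

lemma sum_mul_apply_mul_of_transpose_eq_neg {ι κ R : Type*} [Fintype ι] [Fintype κ]
    [CommRing R] (σ : Matrix ι κ R) {C : Matrix κ κ R} (hC : Cᵀ = -C) (v : ι → R) (a : κ) :
    ∑ i, (σ * C) i a * v i = -∑ b, C a b * ∑ p, σ p b * v p := by
  have hCab : ∀ b, C b a = -C a b := fun b => by simpa using congrFun (congrFun hC a) b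
  simp only [Matrix.mul_apply, Finset.sum_mul, Finset.mul_sum, hCab, ← Finset.sum_neg_distrib]
  rw [Finset.sum_comm]
  exact Finset.sum_congr rfl fun b _ => Finset.sum_congr rfl fun p _ => by ring

theorem statement16_general {n m : ℕ} (M : Set (Fin n → ℝ)) (hM : IsOpen M)
    (σ : (Fin n → ℝ) → Matrix (Fin n) (Fin m) ℝ) (hσ : SmoothMat M σ)
    (Y : (Fin n → ℝ) → Fin n → ℝ) (C : (Fin n → ℝ) → Matrix (Fin m) (Fin m) ℝ)
    (τ : (Fin n → ℝ) → ℝ)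
    (hY : SmoothVec M Y)
    (hC : ∀ x ∈ M, (C x)ᵀ = -(C x))
    (k kbar : (Fin n → ℝ) → ℝ)
    (hkbar : ContDiffOn ℝ (⊤ : ℕ∞) kbar M)
    -- the second determining equation `[Y,σ] + ½τσ + σ·C = 0`
    (hdet2 : ∀ x ∈ M, ∀ i, ∀ α, vfd Y (fun y => σ y i α) x
      - (∑ j, σ x j α * pd j (fun y => Y y i) x)
      + (1 / 2) * τ x * σ x i α + (∑ β, σ x i β * C x β α) = 0)
    -- `Y(k̄) = −k` on `M`
    (hstraight : ∀ x ∈ M, vfd Y kbar x = -(k x)) :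
    ∀ x ∈ M, ∀ a,
      vfd Y (fun y => ∑ p, σ y p a * pd p kbar y) x
        + (1 / 2) * τ x * (∑ p, σ x p a * pd p kbar x)
        - (∑ b, C x a b * (∑ p, σ x p b * pd p kbar x))
        + (∑ p, σ x p a * pd p k x) = 0 := by
  intro x hx a
  have hxM : M ∈ 𝓝 x := hM.mem_nhds hx
  set X : (Fin n → ℝ) → Fin n → ℝ := fun y j => σ y j a
  have hXd : DifferentiableAt ℝ X x := SmoothVec.differentiableAt (fun j => hσ j a) hM hx
  have hYd : DifferentiableAt ℝ Y x := hY.differentiableAt hM hx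
  have hbracket : ∀ i, lieBracket ℝ Y X x i = -((1 / 2) * τ x * σ x i a) - (σ x * C x) i a := by
    intro i
    have := hdet2 x hx i a
    rw [lieBracket_apply_eq_vfd_sub_vfd hXd hYd, Matrix.mul_apply]
    simp only [vfd] at this ⊢
    linarith
  have hXk : vfd X (vfd Y kbar) x = -∑ p, σ x p a * pd p k x := by
    have : vfd Y kbar =ᶠ[𝓝 x] fun y => -k y := Filter.eventually_of_mem hxM hstraight
    rw [vfd_congr_of_eventuallyEq this, vfd_neg]
    rfl
  have hbracket_kbar : vfd (lieBracket ℝ Y X) kbar x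
      = -((1 / 2) * τ x * ∑ p, σ x p a * pd p kbar x)
        + ∑ b, C x a b * ∑ p, σ x p b * pd p kbar x := by
    simp only [vfd, hbracket, sub_mul, neg_mul, Finset.sum_sub_distrib, Finset.sum_neg_distrib,
      sum_mul_apply_mul_of_transpose_eq_neg (σ x) (hC x hx), Finset.mul_sum, mul_assoc, sub_neg_eq_add]
  have hlhs : vfd Y (fun y => ∑ p, σ y p a * pd p kbar y) x = vfd Y (vfd X kbar) x := rfl
  have hcomm := vfd_lieBracket ((hkbar.contDiffAt hxM).of_le (by norm_cast)) hXd hYd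
  rw [hlhs]
  linarith

/-- If `V = (Y,C,τ,H)` satisfies the second determining equation `[Y,σ] + ½τσ + σ·C = 0`
with `H = σᵀ·∇k`, and `Y(k̄) = −k` on `M`, then `h = σᵀ·∇k̄` solves the straightening
equation `Y(h) = (−τ/2 + C)·h − H`, i.e.
`Y(σᵀ·∇k̄) + ½τ·σᵀ·∇k̄ − C·σᵀ·∇k̄ + σᵀ·∇k = 0` on `M`. -/
theorem statement16 {n m : ℕ} (M : Set (Fin n → ℝ)) (hM : IsOpen M)
    (σ : (Fin n → ℝ) → Matrix (Fin n) (Fin m) ℝ) (hσ : SmoothMat M σ)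
    (Y : (Fin n → ℝ) → Fin n → ℝ) (C : (Fin n → ℝ) → Matrix (Fin m) (Fin m) ℝ)
    (τ : (Fin n → ℝ) → ℝ)
    (hY : SmoothVec M Y) (hCs : SmoothMat M C) (hτ : ContDiffOn ℝ (⊤ : ℕ∞) τ M)
    (hC : ∀ x ∈ M, (C x)ᵀ = -(C x))
    (k kbar : (Fin n → ℝ) → ℝ)
    (hk : ContDiffOn ℝ (⊤ : ℕ∞) k M) (hkbar : ContDiffOn ℝ (⊤ : ℕ∞) kbar M)
    -- the second determining equation `[Y,σ] + ½τσ + σ·C = 0`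
    (hdet2 : ∀ x ∈ M, ∀ i, ∀ α, vfd Y (fun y => σ y i α) x
      - (∑ j, σ x j α * pd j (fun y => Y y i) x)
      + (1 / 2) * τ x * σ x i α + (∑ β, σ x i β * C x β α) = 0)
    -- `Y(k̄) = −k` on `M`
    (hstraight : ∀ x ∈ M, vfd Y kbar x = -(k x)) :
    ∀ x ∈ M, ∀ a,
      vfd Y (fun y => ∑ p, σ y p a * pd p kbar y) x
        + (1 / 2) * τ x * (∑ p, σ x p a * pd p kbar x)
        - (∑ b, C x a b * (∑ p, σ x p b * pd p kbar x))
        + (∑ p, σ x p a * pd p k x) = 0 :=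
  statement16_general M hM σ hσ Y C τ hY hC k kbar hkbar hdet2 hstraight
end
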